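/- The operators L_n and U_n are co-idempotent: for every f : ℤ^d → ℝ, L_n(f − L_n f) = 0 and U_n(f − U_n f) = 0 (equivalently, (id − L_n)∘(id − L_n) = id − L_n and (id − U_n)∘(id − U_n) = id − U_n). -/
import Mathlib


open Set

/-- A connection (connected class) on `ℤ^d`. -/
def IsConnection {d : ℕ} (C : Set (Set (Fin d → ℤ))) : Prop :=
  ∅ ∈ C ∧ (∀ x : Fin d → ℤ, {x} ∈ C) ∧
    ∀ S : Set (Set (Fin d → ℤ)), (∀ A ∈ S, A ∈ C) → (⋂₀ S).Nonempty → ⋃₀ S ∈ C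

/-- A connection on `ℤ^d` satisfying the additional axioms (α), (β), (γ). -/
def GoodConnection {d : ℕ} (C : Set (Set (Fin d → ℤ))) : Prop :=
  IsConnection C ∧
  Set.univ ∈ C ∧
  (∀ (a : Fin d → ℤ), ∀ V ∈ C, (fun x => a + x) '' V ∈ C) ∧
  (∀ V ∈ C, ∀ W ∈ C, V ⊂ W → ∃ x ∈ W \ V, insert x V ∈ C)

/-- `𝒩_n(x)`: the connected sets of cardinality `n+1` containing `x`. -/
def Nn {d : ℕ} (C : Set (Set (Fin d → ℤ))) (n : ℕ) (x : Fin d → ℤ) :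
    Set (Set (Fin d → ℤ)) :=
  {V | V ∈ C ∧ x ∈ V ∧ V.encard = (n : ℕ∞) + 1}

/-- The operator `L_n`. -/
noncomputable def Ln {d : ℕ} (C : Set (Set (Fin d → ℤ))) (n : ℕ)
    (f : (Fin d → ℤ) → ℝ) (x : Fin d → ℤ) : ℝ :=
  sSup ((fun V => sInf (f '' V)) '' Nn C n x)

/-- The operator `U_n`. -/
noncomputable def Un {d : ℕ} (C : Set (Set (Fin d → ℤ))) (n : ℕ)
    (f : (Fin d → ℤ) → ℝ) (x : Fin d → ℤ) : ℝ :=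
  sInf ((fun V => sSup (f '' V)) '' Nn C n x)

/-- The set of points adjacent to `V`. -/
def adjSet {d : ℕ} (C : Set (Set (Fin d → ℤ))) (V : Set (Fin d → ℤ)) :
    Set (Fin d → ℤ) :=
  {x | x ∉ V ∧ insert x V ∈ C}

/-- `V` is a local maximum set of `f`. -/
def IsLocalMaxSet {d : ℕ} (C : Set (Set (Fin d → ℤ))) (f : (Fin d → ℤ) → ℝ)
    (V : Set (Fin d → ℤ)) : Prop :=
  V ∈ C ∧ V.Finite ∧ V.Nonempty ∧ ∀ y ∈ adjSet C V, ∀ z ∈ V, f y < f z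

/-- `V` is a local minimum set of `f`. -/
def IsLocalMinSet {d : ℕ} (C : Set (Set (Fin d → ℤ))) (f : (Fin d → ℤ) → ℝ)
    (V : Set (Fin d → ℤ)) : Prop :=
  V ∈ C ∧ V.Finite ∧ V.Nonempty ∧ ∀ y ∈ adjSet C V, ∀ z ∈ V, f z < f y


section auxLnUn
variable {d : ℕ} {C : Set (Set (Fin d → ℤ))} {n : ℕ} {x : Fin d → ℤ}

lemma Nn_finite {V} (hV : V ∈ Nn C n x) : V.Finite :=
  Set.encard_ne_top_iff.mp (by
    rw [hV.2.2]; exact WithTop.add_ne_top.mpr ⟨WithTop.coe_ne_top, WithTop.one_ne_top⟩)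

lemma Nn_nonempty (hd : 1 ≤ d) (hC : GoodConnection C) : (Nn C n x).Nonempty := by
  obtain ⟨hconn, huniv, _, hgamma⟩ := hC
  suffices h : ∀ k : ℕ, ∃ V, V ∈ C ∧ x ∈ V ∧ V.encard = (k : ℕ∞) + 1 by
    obtain ⟨V, h1, h2, h3⟩ := h n; exact ⟨V, h1, h2, h3⟩
  intro k
  induction k with
  | zero => exact ⟨{x}, hconn.2.1 x, rfl, by simp⟩
  | succ k ih =>
    obtain ⟨V, hVC, hxV, hcard⟩ := ih
    have hfin : V.Finite := Set.encard_ne_top_iff.mp (by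
      rw [hcard]; exact WithTop.add_ne_top.mpr ⟨WithTop.coe_ne_top, WithTop.one_ne_top⟩)
    haveI : Nonempty (Fin d) := ⟨⟨0, hd⟩⟩
    have hssub : V ⊂ Set.univ := ssubset_univ_iff.2 (by
      intro h; rw [h] at hfin; exact Set.infinite_univ hfin)
    obtain ⟨y, hy, hins⟩ := hgamma V hVC Set.univ huniv hssub
    refine ⟨insert y V, hins, mem_insert_of_mem _ hxV, ?_⟩
    rw [Set.encard_insert_of_notMem hy.2, hcard]
    push_cast; ring

lemma sInf_image_le_Nn {f : (Fin d → ℤ) → ℝ} {V} (hV : V ∈ Nn C n x) {y} (hy : y ∈ V) :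
    sInf (f '' V) ≤ f y :=
  csInf_le ((Nn_finite hV).image f).bddBelow ⟨y, hy, rfl⟩

lemma le_sSup_image_Nn {f : (Fin d → ℤ) → ℝ} {V} (hV : V ∈ Nn C n x) {y} (hy : y ∈ V) :
    f y ≤ sSup (f '' V) :=
  le_csSup ((Nn_finite hV).image f).bddAbove ⟨y, hy, rfl⟩

lemma bddAbove_Ln_set (f : (Fin d → ℤ) → ℝ) :
    BddAbove ((fun V => sInf (f '' V)) '' Nn C n x) :=
  ⟨f x, by rintro b ⟨V, hV, rfl⟩; exact sInf_image_le_Nn hV hV.2.1⟩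

lemma bddBelow_Un_set (f : (Fin d → ℤ) → ℝ) :
    BddBelow ((fun V => sSup (f '' V)) '' Nn C n x) :=
  ⟨f x, by rintro b ⟨V, hV, rfl⟩; exact le_sSup_image_Nn hV hV.2.1⟩

lemma Ln_le_self (hd : 1 ≤ d) (hC : GoodConnection C) (f : (Fin d → ℤ) → ℝ) (x : Fin d → ℤ) :
    Ln C n f x ≤ f x := by
  apply csSup_le ((Nn_nonempty hd hC).image _)
  rintro b ⟨V, hV, rfl⟩
  exact sInf_image_le_Nn hV hV.2.1

lemma self_le_Un (hd : 1 ≤ d) (hC : GoodConnection C) (f : (Fin d → ℤ) → ℝ) (x : Fin d → ℤ) :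
    f x ≤ Un C n f x := by
  apply le_csInf ((Nn_nonempty hd hC).image _)
  rintro b ⟨V, hV, rfl⟩
  exact le_sSup_image_Nn hV hV.2.1

lemma Nn_mem_of_mem {V} (hV : V ∈ Nn C n x) {y} (hy : y ∈ V) : V ∈ Nn C n y :=
  ⟨hV.1, hy, hV.2.2⟩

end auxLnUn

/-- `L_n` and `U_n` are co-idempotent: `L_n(f − L_n f) = 0` and
`U_n(f − U_n f) = 0`. -/


theorem Ln_Un_coidempotent {d : ℕ} (hd : 1 ≤ d)
    (C : Set (Set (Fin d → ℤ))) (hC : GoodConnection C)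
    (n : ℕ) (hn : 1 ≤ n) (f : (Fin d → ℤ) → ℝ) :
    (Ln C n (fun y => f y - Ln C n f y) = fun _ => (0 : ℝ)) ∧
    (Un C n (fun y => f y - Un C n f y) = fun _ => (0 : ℝ)) := by
  constructor
  · funext x
    set g : (Fin d → ℤ) → ℝ := fun y => f y - Ln C n f y with hg
    have key : ∀ V ∈ Nn C n x, sInf (g '' V) = 0 := by
      intro V hV
      have hfin := Nn_finite hV
      have hne : V.Nonempty := ⟨x, hV.2.1⟩
      -- g is nonnegative
      have hg0 : ∀ y, 0 ≤ g y := fun y => sub_nonneg.mpr (Ln_le_self hd hC f y)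
      -- pick a minimizer of f on V
      obtain ⟨y, hyV, hfy⟩ := (hne.image f).csInf_mem (hfin.image f)
      have h1 : sInf (f '' V) ≤ Ln C n f y :=
        le_csSup (bddAbove_Ln_set f) ⟨V, Nn_mem_of_mem hV hyV, rfl⟩
      have hgy : g y ≤ 0 := by
        have : f y = sInf (f '' V) := hfy
        simp only [hg]; linarith
      refine le_antisymm ?_ ?_
      · exact le_trans (sInf_image_le_Nn hV hyV) hgy
      · exact le_csInf (hne.image g) (by rintro b ⟨z, _, rfl⟩; exact hg0 z)
    have himg : (fun V => sInf (g '' V)) '' Nn C n x = {0} := by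
      rw [Set.eq_singleton_iff_nonempty_unique_mem]
      exact ⟨(Nn_nonempty hd hC).image _, by rintro b ⟨V, hV, rfl⟩; exact key V hV⟩
    show sSup _ = 0
    rw [himg, csSup_singleton]
  · funext x
    set g : (Fin d → ℤ) → ℝ := fun y => f y - Un C n f y with hg
    have key : ∀ V ∈ Nn C n x, sSup (g '' V) = 0 := by
      intro V hV
      have hfin := Nn_finite hV
      have hne : V.Nonempty := ⟨x, hV.2.1⟩
      have hg0 : ∀ y, g y ≤ 0 := fun y => sub_nonpos.mpr (self_le_Un hd hC f y)
      obtain ⟨y, hyV, hfy⟩ := (hne.image f).csSup_mem (hfin.image f)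
      have h1 : Un C n f y ≤ sSup (f '' V) :=
        csInf_le (bddBelow_Un_set f) ⟨V, Nn_mem_of_mem hV hyV, rfl⟩
      have hgy : 0 ≤ g y := by
        have : f y = sSup (f '' V) := hfy
        simp only [hg]; linarith
      refine le_antisymm ?_ ?_
      · exact csSup_le (hne.image g) (by rintro b ⟨z, _, rfl⟩; exact hg0 z)
      · exact le_trans hgy (le_sSup_image_Nn hV hyV)
    have himg : (fun V => sSup (g '' V)) '' Nn C n x = {0} := by
      rw [Set.eq_singleton_iff_nonempty_unique_mem]
      exact ⟨(Nn_nonempty hd hC).image _, by rintro b ⟨V, hV, rfl⟩; exact key V hV⟩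
    show sInf _ = 0
    rw [himg, csInf_singleton]
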